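/- Let P^⊥ be the linear cellular automaton shift determined by Φ, with P = X_d − Φ and S(P) = {e_d} ∪ S(Φ). Define A = {x ∈ P^⊥ : x(0) = 1} and B = {x ∈ P^⊥ : x(0) = 0}. Then A and B are nonempty open subsets of P^⊥ of positive Haar measure, and for every n ∈ ℕ the set σ_{p^n e_d}⁻¹(A) ∩ ⋂_{m ∈ S(Φ)} σ_{p^n m}⁻¹(B) (intersection taken inside P^⊥) is empty, hence has μ-measure 0. In particular the sequence k ↦ μ(σ_{k e_d}⁻¹(A) ∩ ⋂_{m ∈ S(Φ)} σ_{k m}⁻¹(B)) does not converge to μ(A)·∏_{m ∈ S(Φ)} μ(B) as k → ∞, so the shape S(P) is a non-mixing set for P^⊥. -/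

import Mathlib

open MeasureTheory Filter Topology

namespace LCA

/-- The full shift `𝔽_p^{ℤ^d}`. -/
abbrev Full (p d : ℕ) : Type := (Fin d → ℤ) → ZMod p

/-- The shift action: `(σ_g x)(n) = x(n+g)`. -/
def shift (p d : ℕ) (g : Fin d → ℤ) (x : Full p d) : Full p d := fun n => x (n + g)

/-- `e_d = (0,…,0,1)`, the exponent of the "time" variable `X_d`. -/
def eLast (d : ℕ) : Fin d → ℤ := fun i => if (i : ℕ) = d - 1 then 1 else 0

/-- The linear cellular automaton shift `P^⊥` for `P = X_d − Φ`, as a set: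
all `x` with `x(n+e_d) = Σ_{m ∈ S(Φ)} Φ(m)·x(n+m)` for every `n`. -/
def Pperp (p d : ℕ) (Φ : (Fin d → ℤ) →₀ ZMod p) : Set (Full p d) :=
  {x | ∀ n : Fin d → ℤ, x (n + eLast d) = ∑ m ∈ Φ.support, Φ m * x (n + m)}

/-- `P^⊥` as a closed, shift-invariant subgroup of the full shift. -/
def PperpGroup (p d : ℕ) (Φ : (Fin d → ℤ) →₀ ZMod p) : AddSubgroup (Full p d) where
  carrier := Pperp p d Φ
  zero_mem' := by intro n; simp
  add_mem' := by
    intro x y hx hy n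
    simp only [Pi.add_apply, hx n, hy n, mul_add, Finset.sum_add_distrib]
  neg_mem' := by
    intro x hx n
    simp only [Pi.neg_apply, hx n, mul_neg, Finset.sum_neg_distrib, neg_inj]

lemma shift_mem_Pperp (p d : ℕ) (Φ : (Fin d → ℤ) →₀ ZMod p) (g : Fin d → ℤ)
    {x : Full p d} (hx : x ∈ Pperp p d Φ) : shift p d g x ∈ Pperp p d Φ := by
  intro n
  simpa [shift, add_right_comm] using hx (n + g)

/-- The shift action restricted to `P^⊥`. -/
def shiftSub (p d : ℕ) (Φ : (Fin d → ℤ) →₀ ZMod p) (g : Fin d → ℤ)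
    (x : PperpGroup p d Φ) : PperpGroup p d Φ :=
  ⟨shift p d g x.1, shift_mem_Pperp p d Φ g x.2⟩

end LCA

namespace LCA

/-- Borel σ-algebra on `P^⊥` (with the subspace topology). -/
noncomputable instance (p d : ℕ) (Φ : (Fin d → ℤ) →₀ ZMod p) :
    MeasurableSpace (PperpGroup p d Φ) := borel _

instance (p d : ℕ) (Φ : (Fin d → ℤ) →₀ ZMod p) : BorelSpace (PperpGroup p d Φ) := ⟨rfl⟩

end LCA

/-!
Over `𝔽_p` the Laurent polynomial `P = X^{e_d} - Φ` satisfies `P^{p^n} = X^{p^n e_d} - Φ(X^{p^n})`,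
and Laurent polynomials act multiplicatively on configurations by convolution; so every
`x ∈ P^⊥` also obeys `x(v + p^n e_d) = Σ_m Φ(m) x(v + p^n m)`. Hence `x(p^n e_d) = 1` and
`x(p^n m) = 0` for all `m ∈ S(Φ)` never hold together, and the correlations along `k = p^n`
vanish, although `μ(A) μ(B)^{|S(Φ)|} > 0`.

That `A ≠ ∅` needs a point of `P^⊥` with `x(0) = 1`. A linear functional `w : ℤ^d → ℤ` that is
injective on `S(Φ)` and largest at `e_d` turns the defining relation of `P^⊥` into a
one-variable linear recurrence whose lowest coefficient is invertible. Its window-shift map is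
then an injective self-map of a finite set, hence a permutation, and its integer powers produce
a two-sided solution `y` with `y(0) = 1`; take `x = y ∘ w`.
-/

namespace LCA

open AddMonoidAlgebra Finset

section Frobenius

variable {R G : Type*} [CommRing R] [AddCommMonoid G]

def translation : Multiplicative G →* Module.End R (G → R) where
  toFun g := LinearMap.funLeft R R (· + g.toAdd)
  map_one' := by ext x n; simp
  map_mul' g h := by ext x n; simp [add_assoc, add_comm (Multiplicative.toAdd g)]

/-- `(Q x)(n) = Σ_g Q(g) x(n + g)`. -/
noncomputable def laurentAction : R[G] →ₐ[R] Module.End R (G → R) := lift R _ G translation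

lemma laurentAction_single_apply (g : G) (c : R) (x : G → R) (n : G) :
    laurentAction (single g c) x n = c * x (n + g) := by
  simp [laurentAction, translation]

/-- `X^{q e} - Φ(X^q)`; for `q = 1` this is `P = X^e - Φ`. -/
noncomputable def relationPoly (e : G) (Φ : G →₀ R) (q : ℕ) : R[G] :=
  single (q • e) 1 - ∑ m ∈ Φ.support, single (q • m) (Φ m)

lemma laurentAction_relationPoly_apply (e : G) (Φ : G →₀ R) (q : ℕ) (x : G → R) (n : G) :
    laurentAction (relationPoly e Φ q) x n =
      x (n + q • e) - ∑ m ∈ Φ.support, Φ m * x (n + q • m) := by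
  simp [relationPoly, laurentAction_single_apply]

lemma relationPoly_one_pow_prime_pow {p : ℕ} [Fact p.Prime] (e : G) (Φ : G →₀ ZMod p) (k : ℕ) :
    relationPoly e Φ 1 ^ p ^ k = relationPoly e Φ (p ^ k) := by
  have : CharP (ZMod p)[G] p :=
    charP_of_injective_algebraMap (FaithfulSMul.algebraMap_injective (ZMod p) _) p
  simp only [relationPoly, one_smul, sub_pow_char_pow, sum_pow_char_pow, single_pow, one_pow,
    ZMod.pow_card_pow]

theorem apply_add_prime_pow_smul_eq_sum {p : ℕ} [Fact p.Prime] {e : G} {Φ : G →₀ ZMod p}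
    {x : G → ZMod p} (hx : ∀ n, x (n + e) = ∑ m ∈ Φ.support, Φ m * x (n + m)) (k : ℕ) (n : G) :
    x (n + p ^ k • e) = ∑ m ∈ Φ.support, Φ m * x (n + p ^ k • m) := by
  have hP : laurentAction (relationPoly e Φ 1) x = 0 := by
    ext n
    simp [laurentAction_relationPoly_apply, hx]
  obtain ⟨j, hj⟩ := Nat.exists_eq_add_one.mpr (pow_pos (Fact.out : p.Prime).pos k)
  have hPk : laurentAction (relationPoly e Φ (p ^ k)) x = 0 := by
    rw [← relationPoly_one_pow_prime_pow, map_pow, hj, pow_succ, Module.End.mul_apply, hP,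
      map_zero]
  simpa [laurentAction_relationPoly_apply, sub_eq_zero] using congrFun hPk n

end Frobenius

section Recurrence

variable {K : Type*} [Field K]

/-- Shifts a window `(y_t, …, y_{t+n})` of a solution of `y_{t+n+1} = Σ_{j ≤ n} c_j y_{t+j}`
to `(y_{t+1}, …, y_{t+n+1})`. -/
def recurrenceStep (c : ℕ → K) (n : ℕ) (W : Fin (n + 1) → K) : Fin (n + 1) → K :=
  Fin.snoc (α := fun _ => K) (Fin.tail W) (∑ j : Fin (n + 1), c j * W j)

lemma recurrenceStep_injective {c : ℕ → K} (hc : c 0 ≠ 0) (n : ℕ) :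
    Function.Injective (recurrenceStep c n) := by
  intro W W' h
  obtain ⟨htail, hsum⟩ := Fin.snoc_injective2 h
  have hhead : c 0 * W 0 = c 0 * W' 0 := by
    have hsucc : ∀ i : Fin n, W i.succ = W' i.succ := congrFun htail
    simpa [Fin.sum_univ_succ, hsucc] using hsum
  rw [← Fin.cons_self_tail W, ← Fin.cons_self_tail W', htail, mul_left_cancel₀ hc hhead]

theorem exists_int_solution_of_recurrence [Finite K] {c : ℕ → K} (hc : c 0 ≠ 0) (n : ℕ) :
    ∃ y : ℤ → K, y 0 = 1 ∧
      ∀ t : ℤ, y (t + (n + 1 : ℕ)) = ∑ j ∈ range (n + 1), c j * y (t + j) := by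
  let σ : Equiv.Perm (Fin (n + 1) → K) :=
    .ofBijective _ (Finite.injective_iff_bijective.mp (recurrenceStep_injective hc n))
  let W₀ : Fin (n + 1) → K := Pi.single 0 1
  have window : ∀ (j : Fin (n + 1)) (t : ℤ), (σ ^ t) W₀ j = (σ ^ (t + j)) W₀ 0 := by
    intro j
    induction j using Fin.induction with
    | zero => simp
    | succ j ih =>
      intro t
      have hstep : (σ ^ t) W₀ j.succ = (σ ^ (1 + t)) W₀ j.castSucc := by
        simp [zpow_one_add, σ, recurrenceStep, Fin.tail]
      rw [hstep, ih, show 1 + t + ((j.castSucc : ℕ) : ℤ) = t + (j.succ : ℕ) by simp; ring]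
  refine ⟨fun t => (σ ^ t) W₀ 0, by simp [W₀], fun t => ?_⟩
  calc (σ ^ (t + (n + 1 : ℕ))) W₀ 0 = (σ ^ (1 + t)) W₀ (Fin.last n) := by
        rw [window (Fin.last n) (1 + t), show 1 + t + ((Fin.last n : ℕ) : ℤ) = t + (n + 1 : ℕ) by
          simp; ring]
    _ = ∑ j : Fin (n + 1), c j * (σ ^ t) W₀ j := by
        simp [zpow_one_add, σ, recurrenceStep]
    _ = ∑ j ∈ range (n + 1), c j * (σ ^ (t + j)) W₀ 0 := by
        rw [← Fin.sum_univ_eq_sum_range (fun j => c j * (σ ^ (t + j)) W₀ 0)]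
        exact sum_congr rfl fun j _ => by rw [window j t]

theorem exists_recurrence_solution_of_injOn [Finite K] {G : Type*} [AddMonoid G] (w : G →+ ℤ)
    {S : Finset G} {c : G → K} {e : G} (hS : S.Nonempty) (hc : ∀ m ∈ S, c m ≠ 0)
    (hinj : Set.InjOn w S) (he : ∀ m ∈ S, w m < w e) :
    ∃ x : G → K, x 0 = 1 ∧ ∀ n, x (n + e) = ∑ m ∈ S, c m * x (n + m) := by
  classical
  obtain ⟨m₀, hm₀, hmin⟩ := S.exists_min_image w hS
  have he₀ := he m₀ hm₀
  let offset : G → ℕ := fun m => (w m - w m₀).toNat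
  let c' : ℕ → K := fun j => ∑ m ∈ S with offset m = j, c m
  have hc' : c' 0 = c m₀ := by
    refine sum_eq_single_of_mem m₀ (mem_filter.mpr ⟨hm₀, by simp [offset]⟩) fun m hm hne => ?_
    obtain ⟨hmS, hm : (w m - w m₀).toNat = 0⟩ := mem_filter.mp hm
    exact absurd (hinj hmS hm₀ (by have := hmin m hmS; omega)) hne
  obtain ⟨y, hy0, hy⟩ :=
    exists_int_solution_of_recurrence (hc' ▸ hc m₀ hm₀) (w e - w m₀ - 1).toNat
  refine ⟨fun v => y (w v), by simpa using hy0, fun v => ?_⟩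
  calc y (w (v + e)) = y (w v + w m₀ + ((w e - w m₀ - 1).toNat + 1 : ℕ)) := by
        rw [map_add]; congr 1; omega
    _ = ∑ j ∈ range ((w e - w m₀ - 1).toNat + 1), ∑ m ∈ S with offset m = j,
          c m * y (w (v + m)) := by
        rw [hy]
        refine sum_congr rfl fun j _ => ?_
        rw [sum_mul]
        refine sum_congr rfl fun m hm => ?_
        obtain ⟨hmS, hm : (w m - w m₀).toNat = j⟩ := mem_filter.mp hm
        have := hmin m hmS
        rw [map_add]; congr 2; omega
    _ = ∑ m ∈ S, c m * y (w (v + m)) :=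
        sum_fiberwise_of_maps_to
          (fun m hm => mem_range.mpr (by have := he m hm; simp only [offset]; omega)) _

end Recurrence

/-- The witness evaluates `Σ_i v_i X^i` at a non-root of `Π_{v ≠ v'} Σ_i (v - v')_i X^i`. -/
theorem exists_linearMap_injOn {R : Type*} [CommRing R] [IsDomain R] [Infinite R] {n : ℕ}
    (S : Finset (Fin n → R)) : ∃ w : (Fin n → R) →ₗ[R] R, Set.InjOn w S := by
  classical
  let q := ∏ v ∈ S.offDiag, Polynomial.ofFn n (v.1 - v.2)
  have hq : q ≠ 0 := prod_ne_zero_iff.mpr fun v hv =>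
    (map_ne_zero_iff _ (Polynomial.injective_ofFn n)).mpr
      (sub_ne_zero.mpr (mem_offDiag.mp hv).2.2)
  obtain ⟨t, ht⟩ := Infinite.exists_notMem_finset q.roots.toFinset
  have hqt : q.eval t ≠ 0 := fun h => ht (by simpa [hq] using h)
  refine ⟨(Polynomial.leval t).comp (Polynomial.ofFn n), fun v hv v' hv' hvv' => ?_⟩
  by_contra hne
  rw [Polynomial.eval_prod, prod_ne_zero_iff] at hqt
  exact hqt (v, v') (mem_offDiag.mpr ⟨hv, hv', hne⟩) (by simpa [sub_eq_zero] using hvv')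

lemma eLast_eq_single {d : ℕ} (hd : 0 < d) : eLast d = Pi.single ⟨d - 1, by omega⟩ 1 := by
  ext i
  simp [eLast, Pi.single_apply, Fin.ext_iff]

theorem exists_mem_Pperp_apply_zero_eq_one {p d : ℕ} [Fact p.Prime] (hd : 0 < d)
    {Φ : (Fin d → ℤ) →₀ ZMod p} (hΦ : Φ ≠ 0)
    (hΦsupp : ∀ m ∈ Φ.support, m ⟨d - 1, by omega⟩ = 0) :
    ∃ x ∈ Pperp p d Φ, x 0 = 1 := by
  obtain ⟨w₀, hw₀⟩ := exists_linearMap_injOn Φ.support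
  obtain ⟨M, hM⟩ := (Φ.support.image w₀).exists_le
  let w := w₀ + (M + 1 - w₀ (eLast d)) • LinearMap.proj ⟨d - 1, by omega⟩
  have hw : ∀ m ∈ Φ.support, w m = w₀ m := fun m hm => by simp [w, hΦsupp m hm]
  have hwe : w (eLast d) = M + 1 := by simp [w, eLast_eq_single hd]
  obtain ⟨x, hx0, hx⟩ := exists_recurrence_solution_of_injOn w.toAddMonoidHom (e := eLast d)
    (Finsupp.support_nonempty_iff.mpr hΦ) (fun m => Finsupp.mem_support_iff.mp)
    (fun m hm m' hm' h => hw₀ hm hm' (by simpa [hw m hm, hw m' hm'] using h))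
    (fun m hm => by
      simpa [hw m hm, hwe, Int.lt_add_one_iff] using hM _ (mem_image_of_mem w₀ hm))
  exact ⟨x, hx, hx0⟩

theorem preimage_shiftSub_inter_eq_empty {p d : ℕ} [Fact p.Prime] {Φ : (Fin d → ℤ) →₀ ZMod p}
    (k : ℕ) :
    shiftSub p d Φ (p ^ k • eLast d) ⁻¹' {x | (x : Full p d) 0 = 1} ∩
      ⋂ m ∈ Φ.support, shiftSub p d Φ (p ^ k • m) ⁻¹' {x | (x : Full p d) 0 = 0} = ∅ := by
  refine Set.eq_empty_of_forall_notMem fun y ⟨hyA, hyB⟩ => (one_ne_zero : (1 : ZMod p) ≠ 0) ?_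
  simp only [Set.mem_iInter] at hyB
  calc (1 : ZMod p) = (y : Full p d) (0 + p ^ k • eLast d) := hyA.symm
    _ = ∑ m ∈ Φ.support, Φ m * (y : Full p d) (0 + p ^ k • m) :=
      apply_add_prime_pow_smul_eq_sum y.2 k 0
    _ = 0 := sum_eq_zero fun m hm => by
      rw [show (y : Full p d) (0 + p ^ k • m) = 0 from hyB m hm, mul_zero]

end LCA

open LCA MeasureTheory Filter Topology

/-- Let `P^⊥` be the linear cellular automaton shift determined by `Φ`,
`A = {x ∈ P^⊥ : x(0) = 1}` and `B = {x ∈ P^⊥ : x(0) = 0}`.  Then `A` and `B` are nonempty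
open subsets of `P^⊥` of positive Haar measure, for every `n ∈ ℕ` the set
`σ_{p^n e_d}⁻¹(A) ∩ ⋂_{m ∈ S(Φ)} σ_{p^n m}⁻¹(B)` is empty, hence of measure `0`, and the
sequence `k ↦ μ(σ_{k e_d}⁻¹(A) ∩ ⋂_{m ∈ S(Φ)} σ_{k m}⁻¹(B))` does not converge to
`μ(A)·∏_{m ∈ S(Φ)} μ(B)`; so the shape `S(P) = {e_d} ∪ S(Φ)` is a non-mixing set. -/
theorem shape_is_nonmixing (p d : ℕ) [Fact p.Prime] (hd : 2 ≤ d)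
    (Φ : (Fin d → ℤ) →₀ ZMod p)
    (hΦsupp : ∀ m ∈ Φ.support, m ⟨d - 1, by omega⟩ = 0)
    (hΦ2 : 2 ≤ Φ.support.card)
    (μ : Measure (PperpGroup p d Φ)) [μ.IsAddHaarMeasure]
    (A B : Set (PperpGroup p d Φ))
    (hA : A = {x : PperpGroup p d Φ | (x : Full p d) 0 = 1})
    (hB : B = {x : PperpGroup p d Φ | (x : Full p d) 0 = 0}) :
    A.Nonempty ∧ B.Nonempty ∧ IsOpen A ∧ IsOpen B ∧ 0 < μ A ∧ 0 < μ B ∧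
    (∀ n : ℕ,
      (shiftSub p d Φ ((p ^ n : ℕ) • eLast d) ⁻¹' A ∩
          ⋂ m ∈ Φ.support, shiftSub p d Φ ((p ^ n : ℕ) • m) ⁻¹' B) = ∅ ∧
      μ (shiftSub p d Φ ((p ^ n : ℕ) • eLast d) ⁻¹' A ∩
          ⋂ m ∈ Φ.support, shiftSub p d Φ ((p ^ n : ℕ) • m) ⁻¹' B) = 0) ∧
    ¬ Tendsto
        (fun k : ℕ =>
          μ (shiftSub p d Φ (k • eLast d) ⁻¹' A ∩
              ⋂ m ∈ Φ.support, shiftSub p d Φ (k • m) ⁻¹' B))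
        atTop (nhds (μ A * ∏ _m ∈ Φ.support, μ B)) := by
  subst hA hB
  have hopen (a : ZMod p) : IsOpen {x : PperpGroup p d Φ | (x : Full p d) 0 = a} :=
    (isOpen_discrete {a}).preimage
      ((continuous_apply (0 : Fin d → ℤ)).comp continuous_subtype_val :
        Continuous fun x : PperpGroup p d Φ => (x : Full p d) 0)
  obtain ⟨x, hx, hx0⟩ := exists_mem_Pperp_apply_zero_eq_one (by omega)
    (by rintro rfl; simp at hΦ2) hΦsupp
  have hA : 0 < μ {x | (x : Full p d) 0 = 1} := (hopen 1).measure_pos μ ⟨⟨x, hx⟩, hx0⟩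
  have hB : 0 < μ {x | (x : Full p d) 0 = 0} := (hopen 0).measure_pos μ ⟨0, rfl⟩
  have hempty := preimage_shiftSub_inter_eq_empty (p := p) (Φ := Φ)
  refine ⟨⟨⟨x, hx⟩, hx0⟩, ⟨0, rfl⟩, hopen 1, hopen 0, hA, hB,
    fun n => ⟨hempty n, by rw [hempty n, measure_empty]⟩, fun hlim => ?_⟩
  have hsub := hlim.comp (tendsto_pow_atTop_atTop_of_one_lt (Fact.out : p.Prime).one_lt)
  simp only [Function.comp_def, hempty, measure_empty] at hsub
  exact mul_ne_zero hA.ne' (Finset.prod_ne_zero_iff.mpr fun _ _ => hB.ne')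
    (tendsto_nhds_unique hsub tendsto_const_nhds)
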